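/- arXiv:2208.03627 — 2 statements merged into one kernel-verified Lean document; each statement's English description precedes it below -/
import Mathlib

section
/- The function D(t) = ½( t(1 - e^{-2t}) - 2(1 - e^{-t})² ) is strictly positive for all t > 0. -/
/-!
With `u = e^{-t}` the numerator of `D` factors as `(1 - u) (t (1 + u) - 2 (1 - u))`, so it suffices
that `2 (1 - u) / (1 + u) < t = -log u`. With `x = (1 - u) / (1 + u)` one has
`-log u = log (1 + x) - log (1 - x) = ∑ 2 x ^ (2k+1) / (2k+1)`, whose first term is `2 x`
and whose other terms are positive.
-/

noncomputable section

/-- `D(t) = ½( t(1 - e^{-2t}) - 2(1 - e^{-t})² )`. -/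
def Dfun (t : ℝ) : ℝ :=
  (t * (1 - Real.exp (-(2 * t))) - 2 * (1 - Real.exp (-t)) ^ 2) / 2

open Real

lemma Real.two_mul_lt_log_sub_log {x : ℝ} (hx₀ : 0 < x) (hx₁ : x < 1) :
    2 * x < log (1 + x) - log (1 - x) := by
  have hsum := hasSum_log_sub_log_of_abs_lt_one (abs_lt.2 ⟨by linarith, hx₁⟩)
  simpa using lt_hasSum hsum 0 (fun _ _ ↦ by positivity) 1 one_ne_zero (by positivity)

lemma Real.log_lt_two_mul_sub_one_div_add_one {u : ℝ} (hu₀ : 0 < u) (hu₁ : u < 1) :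
    log u < 2 * (u - 1) / (u + 1) := by
  set x := (1 - u) / (1 + u) with hx
  have hx₀ : 0 < x := by apply div_pos <;> linarith
  have hx₁ : x < 1 := (div_lt_one (by linarith)).2 (by linarith)
  have hadd : 1 + x = 2 / (1 + u) := by rw [hx]; field_simp; ring
  have hsub : 1 - x = 2 * u / (1 + u) := by rw [hx]; field_simp; ring
  have hlog : log (1 + x) - log (1 - x) = -log u := by
    rw [← log_div (by linarith) (by linarith), hadd, hsub,
      div_div_div_cancel_right₀ (by linarith), div_mul_cancel_left₀ two_ne_zero, log_inv]
  have hseries := two_mul_lt_log_sub_log hx₀ hx₁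
  have hrhs : 2 * (u - 1) / (u + 1) = -(2 * x) := by rw [hx]; ring
  linarith

lemma Real.two_mul_one_sub_exp_neg_lt {t : ℝ} (ht : 0 < t) :
    2 * (1 - exp (-t)) < t * (1 + exp (-t)) := by
  have h := log_lt_two_mul_sub_one_div_add_one (exp_pos (-t)) (exp_lt_one_iff.2 (neg_lt_zero.2 ht))
  rw [log_exp, lt_div_iff₀ (by positivity)] at h
  linarith

/-- `D(t) > 0` for all `t > 0`. -/
theorem Dfun_pos {t : ℝ} (ht : 0 < t) : 0 < Dfun t := by
  have hfactor :
      Dfun t = (1 - exp (-t)) * (t * (1 + exp (-t)) - 2 * (1 - exp (-t))) / 2 := by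
    rw [Dfun, show -(2 * t) = -t + -t by ring, exp_add]
    ring
  have hexp_lt_one : exp (-t) < 1 := exp_lt_one_iff.2 (neg_lt_zero.2 ht)
  have hkey := two_mul_one_sub_exp_neg_lt ht
  rw [hfactor]
  apply div_pos (mul_pos _ _) two_pos <;> linarith

end
end

section
/- If g₀ ∈ L²(ℝ³_v), then for all t > 0, k ≥ 0 and ξ ∈ ℝ³, ‖ |ξ|^k e^{tA(ξ)} g₀ ‖²_{L²_v} ≤ C(k) (1 + t^{-3k}) e^{-4t} ‖g₀‖²_{L²_v}, where A(ξ) = L - 2 - i(v·ξ) and e^{tA(ξ)} is given by the explicit kernel Ĝ₁(t,ξ,v;u). -/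
open MeasureTheory Real
open scoped RealInnerProductSpace

noncomputable section

abbrev E3 := EuclideanSpace ℝ (Fin 3)

/-- The Fourier-transformed kinetic Fokker–Planck kernel `Ĝ₁(t,ξ,v;u)`,
the kernel of the semigroup `e^{tA(ξ)}` with `A(ξ) = L - 2 - i(v·ξ)`. -/
def G1hat (t : ℝ) (ξ v u : E3) : ℂ :=
  (((2 * Real.pi) ^ (-(3 : ℝ)) * (4 / (1 - Real.exp (-(2 * t)))) ^ ((3 : ℝ) / 2) : ℝ) : ℂ) *
    Complex.exp
      (-Complex.I * ((⟪ξ, v + u⟫ * ((1 - Real.exp (-t)) / (1 + Real.exp (-t))) : ℝ) : ℂ)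
        - ((2 * Dfun t * ‖ξ‖ ^ 2 / (1 - Real.exp (-(2 * t)))
            + (1 + Real.exp (-(2 * t))) / (4 * (1 - Real.exp (-(2 * t)))) *
              ‖(2 * Real.exp (-t) / (1 + Real.exp (-(2 * t)))) • v - u‖ ^ 2
            + (1 - Real.exp (-(2 * t))) / (4 * (1 + Real.exp (-(2 * t)))) * ‖v‖ ^ 2
            + 2 * t : ℝ) : ℂ))

/-!
Write `q = e^{-t}` and `s = 2 D(t) |ξ|² / (1 - q²)`. The modulus of the kernel is
`c(t) e^{-s - 2t} e^{-a(t) (|v|² + |u|² - 2 β(t) v·u)}` with `0 ≤ β ≤ 1`: it is symmetric in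
`v, u` and dominated by a Gaussian in `u` centred at `β v`, so its row and column `L¹` norms are
both at most `C₀ e^{-s} e^{-2t}`. Schur's test bounds `‖e^{tA(ξ)}‖²_{L² → L²}` by
`C₀² e^{-2s} e^{-4t}`. Finally `2 D(t) / (1 - q²) ≥ min(t³, 1) / 26`, and `y^k e^{-p y} ≤ (k/p)^k`
turns `|ξ|^{2k} e^{-2s}` into `(13 k)^k min(t³, 1)^{-k} ≤ (13 k)^k (1 + t^{-3k})`.
-/

open scoped ENNReal

lemma exp_neg_two_mul_eq_sq (t : ℝ) : exp (-(2 * t)) = exp (-t) ^ 2 := by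
  rw [← exp_nat_mul]; ring_nf

lemma cube_div_le_mul_one_add_exp_neg_sub {t : ℝ} (h0 : 0 ≤ t) (h1 : t ≤ 1) :
    t ^ 3 / 13 ≤ t * (1 + exp (-t)) - 2 * (1 - exp (-t)) := by
  -- the right side is `t³/6 - t⁴/12 + O(t⁵)`; expand `e^{-t}` to order 5
  have hb := Real.exp_bound (x := -t) (by rwa [abs_neg, abs_of_nonneg h0]) (n := 6) (by norm_num)
  have hsum : ∑ m ∈ Finset.range 6, (-t) ^ m / (Nat.factorial m) =
      1 - t + t ^ 2 / 2 - t ^ 3 / 6 + t ^ 4 / 24 - t ^ 5 / 120 := by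
    simp only [Finset.sum_range_succ, Finset.sum_range_zero, Nat.factorial]
    push_cast
    ring
  rw [hsum, abs_neg, abs_of_nonneg h0] at hb
  have htaylor : 1 - t + t ^ 2 / 2 - t ^ 3 / 6 + t ^ 4 / 24 - t ^ 5 / 120
      - t ^ 6 * (7 / 4320) ≤ exp (-t) := by
    norm_num [Nat.factorial] at hb
    linarith [(abs_le.1 hb).1]
  nlinarith [mul_le_mul_of_nonneg_left htaylor (by linarith : (0:ℝ) ≤ t + 2),
    pow_nonneg h0 3, pow_nonneg h0 4, pow_nonneg h0 5,
    mul_nonneg (pow_nonneg h0 3) (by linarith : (0:ℝ) ≤ 1 - t),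
    mul_nonneg (pow_nonneg h0 4) (by nlinarith : (0:ℝ) ≤ 108 - 50 * t - 7 * t ^ 2)]

lemma monotone_mul_one_add_exp_neg_sub :
    Monotone fun t : ℝ => t * (1 + exp (-t)) - 2 * (1 - exp (-t)) := by
  have hderiv : ∀ t : ℝ, HasDerivAt (fun t : ℝ => t * (1 + exp (-t)) - 2 * (1 - exp (-t)))
      (1 - (1 + t) * exp (-t)) t := by
    intro t
    have he : HasDerivAt (fun t : ℝ => exp (-t)) (-exp (-t)) t := by
      simpa using (hasDerivAt_neg t).exp
    have h : HasDerivAt (fun t : ℝ => t * (1 + exp (-t)) - 2 * (1 - exp (-t)))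
        (1 * (1 + exp (-t)) + t * (0 + -exp (-t)) - 2 * (0 - -exp (-t))) t :=
      ((hasDerivAt_id' t).mul ((hasDerivAt_const t (1 : ℝ)).add he)).sub
        (((hasDerivAt_const t (1 : ℝ)).sub he).const_mul 2)
    exact h.congr_deriv (by ring)
  refine monotone_of_deriv_nonneg (fun t => (hderiv t).differentiableAt) fun t => ?_
  have hexp : (1 + t) * exp (-t) ≤ 1 :=
    calc (1 + t) * exp (-t) ≤ exp t * exp (-t) := by gcongr; linarith [add_one_le_exp t]
      _ = 1 := by rw [← exp_add, add_neg_cancel, exp_zero]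
  rw [(hderiv t).deriv]
  linarith

lemma min_cube_one_div_le_mul_one_add_exp_neg_sub {t : ℝ} (ht : 0 ≤ t) :
    min (t ^ 3) 1 / 13 ≤ t * (1 + exp (-t)) - 2 * (1 - exp (-t)) := by
  rcases le_total t 1 with h1 | h1
  · exact (div_le_div_of_nonneg_right (min_le_left _ _) (by norm_num)).trans
      (cube_div_le_mul_one_add_exp_neg_sub ht h1)
  · calc min (t ^ 3) 1 / 13 ≤ 1 ^ 3 / 13 := by gcongr; simp
      _ ≤ 1 * (1 + exp (-1)) - 2 * (1 - exp (-1)) :=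
        cube_div_le_mul_one_add_exp_neg_sub zero_le_one le_rfl
      _ ≤ t * (1 + exp (-t)) - 2 * (1 - exp (-t)) := monotone_mul_one_add_exp_neg_sub h1

lemma min_cube_one_div_le_two_mul_Dfun_div {t : ℝ} (ht : 0 < t) :
    min (t ^ 3) 1 / 26 ≤ 2 * Dfun t / (1 - exp (-(2 * t))) := by
  have hq : exp (-t) < 1 := exp_lt_one_iff.2 (by linarith)
  have hq0 : 0 < exp (-t) := exp_pos _
  -- `1 - e^{-2t} = (1 - e^{-t}) (1 + e^{-t})` and `1 - e^{-t}` divides `2 D(t)`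
  have hratio : 2 * Dfun t / (1 - exp (-(2 * t))) =
      (t * (1 + exp (-t)) - 2 * (1 - exp (-t))) / (1 + exp (-t)) := by
    rw [Dfun, exp_neg_two_mul_eq_sq, div_eq_div_iff (by nlinarith) (by linarith)]
    ring
  have hh := min_cube_one_div_le_mul_one_add_exp_neg_sub ht.le
  have hmin : 0 < min (t ^ 3) 1 := lt_min (pow_pos ht 3) one_pos
  rw [hratio, le_div_iff₀ (by linarith)]
  nlinarith

lemma rpow_mul_exp_neg_mul_le {k p y : ℝ} (hk : 0 ≤ k) (hp : 0 < p) (hy : 0 ≤ y) :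
    y ^ k * exp (-(p * y)) ≤ (k / p) ^ k := by
  rcases hk.eq_or_lt with rfl | hk
  · simpa using mul_nonneg hp.le hy
  rcases hy.eq_or_lt with rfl | hy
  · simpa [zero_rpow hk.ne'] using rpow_nonneg (div_pos hk hp).le k
  have hq : 0 < p * y / k := by positivity
  rw [rpow_def_of_pos hy, rpow_def_of_pos (div_pos hk hp), ← exp_add, exp_le_exp]
  -- `log y = log (k / p) + log (p y / k)` and `log x ≤ x - 1`
  have hsplit : log y = log (k / p) + log (p * y / k) := by
    rw [← log_mul (div_pos hk hp).ne' hq.ne']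
    congr 1
    field_simp
  have hlog := mul_le_mul_of_nonneg_left (log_le_sub_one_of_pos hq) hk.le
  have hid : k * (p * y / k - 1) = p * y - k := by field_simp
  nlinarith

lemma min_cube_one_rpow_neg_le {k t : ℝ} (ht : 0 < t) :
    min (t ^ 3) 1 ^ (-k) ≤ 1 + t ^ (-(3 * k)) := by
  rcases le_total t 1 with h1 | h1
  · rw [min_eq_left (pow_le_one₀ ht.le h1), ← rpow_natCast, ← rpow_mul ht.le,
      show ((3 : ℕ) : ℝ) * -k = -(3 * k) by push_cast; ring]
    linarith
  · rw [min_eq_right (one_le_pow₀ h1), one_rpow]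
    linarith [rpow_pos_of_pos ht (-(3 * k))]

section Gaussian

variable {V : Type*} [NormedAddCommGroup V] [InnerProductSpace ℝ V] [FiniteDimensional ℝ V]
  [MeasurableSpace V] [BorelSpace V]

lemma integrable_exp_neg_mul_sq_norm {p : ℝ} (hp : 0 < p) :
    Integrable fun x : V => exp (-(p * ‖x‖ ^ 2)) := by
  refine (GaussianFourier.integrable_cexp_neg_mul_sq_norm_add (V := V) (b := (p : ℂ))
    (by simpa using hp) 0 0).norm.congr (.of_forall fun x => ?_)
  simp [Complex.norm_exp, ← Complex.ofReal_pow]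

lemma lintegral_exp_neg_mul_sq_norm_sub {p : ℝ} (hp : 0 < p) (z : V) :
    ∫⁻ x, ENNReal.ofReal (exp (-(p * ‖x - z‖ ^ 2))) =
      ENNReal.ofReal ((π / p) ^ (Module.finrank ℝ V / 2 : ℝ)) := by
  rw [lintegral_sub_right_eq_self (fun x : V => ENNReal.ofReal (exp (-(p * ‖x‖ ^ 2)))) z,
    ← ofReal_integral_eq_lintegral_ofReal (integrable_exp_neg_mul_sq_norm hp)
      (.of_forall fun x => (exp_pos _).le), ← GaussianFourier.integral_rexp_neg_mul_sq_norm hp]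
  simp only [neg_mul]

lemma lintegral_enorm_le_of_le_gaussian {F : Type*} [NormedAddCommGroup F] {f : V → F}
    {C p : ℝ} (hp : 0 < p) (z : V) (hf : ∀ x, ‖f x‖ ≤ C * exp (-(p * ‖x - z‖ ^ 2))) :
    ∫⁻ x, ‖f x‖ₑ ≤ ENNReal.ofReal (C * (π / p) ^ (Module.finrank ℝ V / 2 : ℝ)) := by
  have hC : 0 ≤ C := by simpa using (norm_nonneg _).trans (hf z)
  calc ∫⁻ x, ‖f x‖ₑ = ∫⁻ x, ENNReal.ofReal ‖f x‖ := by simp only [ofReal_norm]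
    _ ≤ ∫⁻ x, ENNReal.ofReal C * ENNReal.ofReal (exp (-(p * ‖x - z‖ ^ 2))) :=
      lintegral_mono fun x => (ENNReal.ofReal_le_ofReal (hf x)).trans_eq (ENNReal.ofReal_mul hC)
    _ = ENNReal.ofReal (C * (π / p) ^ (Module.finrank ℝ V / 2 : ℝ)) := by
      rw [lintegral_const_mul' _ _ ENNReal.ofReal_ne_top, lintegral_exp_neg_mul_sq_norm_sub hp,
        ← ENNReal.ofReal_mul hC]

end Gaussian

section SchurTest

variable {α β : Type*} [MeasurableSpace α] [MeasurableSpace β] {μ : Measure α} {ν : Measure β}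

lemma lintegral_mul_sq_le {K g : α → ℝ≥0∞} (hK : AEMeasurable K μ) (hg : AEMeasurable g μ) :
    (∫⁻ x, K x * g x ∂μ) ^ 2 ≤ (∫⁻ x, K x ∂μ) * ∫⁻ x, K x * g x ^ 2 ∂μ := by
  have hhalf : ∀ a : ℝ≥0∞, (a ^ (2⁻¹ : ℝ)) ^ 2 = a := fun a => by
    rw [← ENNReal.rpow_two, ENNReal.rpow_inv_rpow two_ne_zero]
  -- Hölder with exponents `1/2, 1/2` applied to `K` and `K g²`
  have h := ENNReal.lintegral_mul_norm_pow_le hK (hK.mul (hg.pow_const 2))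
    (p := 2⁻¹) (q := 2⁻¹) (by norm_num) (by norm_num) (by norm_num)
  have hint : ∀ x, K x ^ (2⁻¹ : ℝ) * (K x * g x ^ 2) ^ (2⁻¹ : ℝ) = K x * g x := fun x => by
    rw [ENNReal.mul_rpow_of_nonneg _ _ (by norm_num), ← mul_assoc, ← sq, hhalf,
      ← ENNReal.rpow_two, ENNReal.rpow_rpow_inv two_ne_zero]
  simp only [Pi.mul_apply, hint] at h
  calc (∫⁻ x, K x * g x ∂μ) ^ 2
      ≤ ((∫⁻ x, K x ∂μ) ^ (2⁻¹ : ℝ) * (∫⁻ x, K x * g x ^ 2 ∂μ) ^ (2⁻¹ : ℝ)) ^ 2 := by gcongr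
    _ = (∫⁻ x, K x ∂μ) * ∫⁻ x, K x * g x ^ 2 ∂μ := by rw [mul_pow, hhalf, hhalf]

lemma lintegral_sq_lintegral_mul_le [SFinite μ] [SFinite ν] {K : α → β → ℝ≥0∞}
    (hK : Measurable (Function.uncurry K)) {g : β → ℝ≥0∞} (hg : AEMeasurable g ν) {A B : ℝ≥0∞}
    (hrow : ∀ x, ∫⁻ y, K x y ∂ν ≤ A) (hcol : ∀ y, ∫⁻ x, K x y ∂μ ≤ B) :
    ∫⁻ x, (∫⁻ y, K x y * g y ∂ν) ^ 2 ∂μ ≤ A * B * ∫⁻ y, g y ^ 2 ∂ν := by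
  have hKx : ∀ x, Measurable (K x) := fun x => hK.comp measurable_prodMk_left
  have hKg : AEMeasurable (Function.uncurry fun x y => K x y * g y ^ 2) (μ.prod ν) :=
    hK.aemeasurable.mul (hg.pow_const 2).comp_snd
  calc ∫⁻ x, (∫⁻ y, K x y * g y ∂ν) ^ 2 ∂μ
      ≤ ∫⁻ x, A * ∫⁻ y, K x y * g y ^ 2 ∂ν ∂μ :=
        lintegral_mono fun x =>
          (lintegral_mul_sq_le (hKx x).aemeasurable hg).trans (by gcongr; exact hrow x)
    _ = A * ∫⁻ y, (∫⁻ x, K x y ∂μ) * g y ^ 2 ∂ν := by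
        rw [lintegral_const_mul'' _ (by exact hKg.lintegral_prod_right'),
          lintegral_lintegral_swap hKg]
        congr 1
        refine lintegral_congr fun y => lintegral_mul_const _ (hK.comp measurable_prodMk_right)
    _ ≤ A * ∫⁻ y, B * g y ^ 2 ∂ν := by gcongr with y; exact hcol y
    _ = A * B * ∫⁻ y, g y ^ 2 ∂ν := by rw [lintegral_const_mul'' _ (hg.pow_const 2), mul_assoc]

lemma integral_le_of_lintegral_ofReal_le {f : α → ℝ} (hf : ∀ x, 0 ≤ f x) {R : ℝ} (hR : 0 ≤ R)
    (h : ∫⁻ x, ENNReal.ofReal (f x) ∂μ ≤ ENNReal.ofReal R) : ∫ x, f x ∂μ ≤ R :=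
  calc ∫ x, f x ∂μ ≤ ‖∫ x, f x ∂μ‖ := Real.le_norm_self _
    _ ≤ (∫⁻ x, ENNReal.ofReal ‖f x‖ ∂μ).toReal := norm_integral_le_lintegral_norm (μ := μ) f
    _ ≤ R := ENNReal.toReal_le_of_le_ofReal hR (by simpa only [norm_of_nonneg (hf _)] using h)

lemma integral_sq_norm_integral_mul_le [SFinite μ] [SFinite ν] {𝕜 : Type*} [RCLike 𝕜]
    {K : α → β → 𝕜} (hK : Measurable (Function.uncurry K)) {g : β → 𝕜} (hg : MemLp g 2 ν)
    {A B : ℝ} (hA : 0 ≤ A) (hB : 0 ≤ B)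
    (hrow : ∀ x, ∫⁻ y, ‖K x y‖ₑ ∂ν ≤ ENNReal.ofReal A)
    (hcol : ∀ y, ∫⁻ x, ‖K x y‖ₑ ∂μ ≤ ENNReal.ofReal B) :
    ∫ x, ‖∫ y, K x y * g y ∂ν‖ ^ 2 ∂μ ≤ A * B * ∫ y, ‖g y‖ ^ 2 ∂ν := by
  have hg2 : ∫⁻ y, ‖g y‖ₑ ^ 2 ∂ν = ENNReal.ofReal (∫ y, ‖g y‖ ^ 2 ∂ν) := by
    rw [ofReal_integral_eq_lintegral_ofReal (hg.integrable_norm_pow two_ne_zero)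
      (.of_forall fun y => by positivity)]
    simp only [ENNReal.ofReal_pow (norm_nonneg _), ofReal_norm]
  refine integral_le_of_lintegral_ofReal_le (fun x => by positivity)
    (by positivity) ?_
  calc ∫⁻ x, ENNReal.ofReal (‖∫ y, K x y * g y ∂ν‖ ^ 2) ∂μ
      = ∫⁻ x, ‖∫ y, K x y * g y ∂ν‖ₑ ^ 2 ∂μ := by
        simp only [ENNReal.ofReal_pow (norm_nonneg _), ofReal_norm]
    _ ≤ ∫⁻ x, (∫⁻ y, ‖K x y‖ₑ * ‖g y‖ₑ ∂ν) ^ 2 ∂μ := by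
        gcongr with x
        simpa only [enorm_mul] using enorm_integral_le_lintegral_enorm fun y => K x y * g y
    _ ≤ ENNReal.ofReal A * ENNReal.ofReal B * ∫⁻ y, ‖g y‖ₑ ^ 2 ∂ν :=
        lintegral_sq_lintegral_mul_le hK.enorm hg.aestronglyMeasurable.enorm hrow hcol
    _ = ENNReal.ofReal (A * B * ∫ y, ‖g y‖ ^ 2 ∂ν) := by
        rw [hg2, ENNReal.ofReal_mul (mul_nonneg hA hB), ENNReal.ofReal_mul hA]

end SchurTest

namespace G1hat

def prefactor (t : ℝ) : ℝ := (2 * π) ^ (-(3 : ℝ)) * (4 / (1 - exp (-(2 * t)))) ^ ((3 : ℝ) / 2)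

def width (t : ℝ) : ℝ := (1 + exp (-(2 * t))) / (4 * (1 - exp (-(2 * t))))

def shift (t : ℝ) : ℝ := 2 * exp (-t) / (1 + exp (-(2 * t)))

def damping (t : ℝ) (ξ : E3) : ℝ := 2 * Dfun t * ‖ξ‖ ^ 2 / (1 - exp (-(2 * t)))

def massBound : ℝ := (2 * π) ^ (-(3 : ℝ)) * (16 * π) ^ ((3 : ℝ) / 2)

variable {t : ℝ}

lemma one_sub_exp_neg_two_mul_pos (ht : 0 < t) : 0 < 1 - exp (-(2 * t)) := by
  linarith [exp_lt_one_iff.2 (by linarith : -(2 * t) < 0)]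

lemma width_pos (ht : 0 < t) : 0 < width t := by
  have := one_sub_exp_neg_two_mul_pos ht
  unfold width; positivity

lemma shift_nonneg (t : ℝ) : 0 ≤ shift t := by
  unfold shift; positivity

lemma shift_le_one (t : ℝ) : shift t ≤ 1 := by
  rw [shift, div_le_one (by positivity), exp_neg_two_mul_eq_sq]
  nlinarith [sq_nonneg (1 - exp (-t))]

lemma prefactor_nonneg (ht : 0 < t) : 0 ≤ prefactor t := by
  have := one_sub_exp_neg_two_mul_pos ht
  unfold prefactor; positivity

lemma norm_eq (ht : 0 < t) (ξ v u : E3) :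
    ‖G1hat t ξ v u‖ = prefactor t *
      exp (-(damping t ξ + width t * (‖v‖ ^ 2 + ‖u‖ ^ 2 - 2 * shift t * ⟪v, u⟫) + 2 * t)) := by
  rw [G1hat, norm_mul, Complex.norm_real, Complex.norm_exp, ← prefactor,
    norm_of_nonneg (prefactor_nonneg ht)]
  congr 2
  -- the `‖v‖²` term merges into the `width` term:
  -- `width * shift² + (1 - e^{-2t}) / (4 (1 + e^{-2t})) = width`
  simp only [Complex.sub_re, Complex.neg_re, Complex.mul_re, Complex.I_re, Complex.I_im,
    Complex.ofReal_re, Complex.ofReal_im, Complex.neg_im, norm_sub_sq_real, norm_smul,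
    real_inner_smul_left, mul_pow, Real.norm_eq_abs, sq_abs]
  have h1 := one_sub_exp_neg_two_mul_pos ht
  have h2 : 0 < 1 + exp (-(2 * t)) := by positivity
  rw [damping, width, shift]
  rw [exp_neg_two_mul_eq_sq] at h1 h2 ⊢
  field_simp
  ring

lemma enorm_comm (ht : 0 < t) (ξ v u : E3) : ‖G1hat t ξ v u‖ₑ = ‖G1hat t ξ u v‖ₑ := by
  rw [← ofReal_norm, ← ofReal_norm, norm_eq ht, norm_eq ht, real_inner_comm, add_comm (‖v‖ ^ 2)]

lemma norm_le_gaussian (ht : 0 < t) (ξ v u : E3) :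
    ‖G1hat t ξ v u‖ ≤ prefactor t * exp (-(damping t ξ + 2 * t)) *
      exp (-(width t * ‖u - shift t • v‖ ^ 2)) := by
  rw [norm_eq ht, mul_assoc (prefactor t), ← exp_add]
  refine mul_le_mul_of_nonneg_left (exp_le_exp.2 ?_) (prefactor_nonneg ht)
  -- the quadratic form exceeds `width ‖u - shift • v‖²` by `width (1 - shift²) ‖v‖²`
  have hs : shift t ^ 2 ≤ 1 := pow_le_one₀ (shift_nonneg t) (shift_le_one t)
  rw [norm_sub_sq_real, norm_smul, inner_smul_right, norm_of_nonneg (shift_nonneg t),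
    real_inner_comm]
  nlinarith [mul_nonneg (width_pos ht).le (mul_nonneg (sub_nonneg.2 hs) (sq_nonneg ‖v‖))]

lemma prefactor_mul_rpow_le (ht : 0 < t) :
    prefactor t * (π / width t) ^ ((3 : ℝ) / 2) ≤ massBound := by
  have h1 := one_sub_exp_neg_two_mul_pos ht
  have h2 : 0 < 1 + exp (-(2 * t)) := by positivity
  rw [prefactor, massBound, mul_assoc, ← mul_rpow (by positivity)
    (div_pos pi_pos (width_pos ht)).le]
  have hkey : 4 / (1 - exp (-(2 * t))) * (π / width t) = 16 * π / (1 + exp (-(2 * t))) := by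
    rw [width]; field_simp; ring
  rw [hkey]
  gcongr
  exact div_le_self (by positivity) (by linarith [exp_pos (-(2 * t))])

lemma lintegral_enorm_le (ht : 0 < t) (ξ v : E3) :
    ∫⁻ u, ‖G1hat t ξ v u‖ₑ ≤
      ENNReal.ofReal (massBound * exp (-damping t ξ) * exp (-(2 * t))) := by
  refine (lintegral_enorm_le_of_le_gaussian (width_pos ht) (shift t • v)
    (norm_le_gaussian ht ξ v)).trans (ENNReal.ofReal_le_ofReal ?_)
  rw [finrank_euclideanSpace_fin]
  calc prefactor t * exp (-(damping t ξ + 2 * t)) * (π / width t) ^ ((3 : ℕ) / 2 : ℝ)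
      = prefactor t * (π / width t) ^ ((3 : ℝ) / 2) * (exp (-damping t ξ) * exp (-(2 * t))) := by
        rw [← exp_add, neg_add]; push_cast; ring
    _ ≤ massBound * (exp (-damping t ξ) * exp (-(2 * t))) := by
        gcongr; exact prefactor_mul_rpow_le ht
    _ = massBound * exp (-damping t ξ) * exp (-(2 * t)) := by ring

lemma continuous_uncurry (t : ℝ) (ξ : E3) :
    Continuous fun p : E3 × E3 => G1hat t ξ p.1 p.2 := by
  unfold G1hat; fun_prop

lemma massBound_pos : 0 < massBound := by
  unfold massBound; positivity

lemma integral_sq_norm_integral_mul_le (ht : 0 < t) (ξ : E3) {g : E3 → ℂ} (hg : MemLp g 2) :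
    ∫ v, ‖∫ u, G1hat t ξ v u * g u‖ ^ 2 ≤
      (massBound * exp (-damping t ξ) * exp (-(2 * t))) ^ 2 * ∫ u, ‖g u‖ ^ 2 := by
  have hM : 0 ≤ massBound * exp (-damping t ξ) * exp (-(2 * t)) := by
    have := massBound_pos; positivity
  rw [sq]
  exact _root_.integral_sq_norm_integral_mul_le (continuous_uncurry t ξ).measurable hg hM hM
    (lintegral_enorm_le ht ξ) fun u =>
      (lintegral_congr fun v => enorm_comm ht ξ v u).trans_le (lintegral_enorm_le ht ξ u)

lemma norm_rpow_sq_mul_exp_damping_le {k : ℝ} (hk : 0 ≤ k) (ht : 0 < t) (ξ : E3) :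
    (‖ξ‖ ^ k) ^ 2 * exp (-(2 * damping t ξ)) ≤ (13 * k) ^ k * (1 + t ^ (-(3 * k))) := by
  set m := min (t ^ 3) 1
  have hm : 0 < m := lt_min (pow_pos ht 3) one_pos
  have hdamp : m / 26 * ‖ξ‖ ^ 2 ≤ damping t ξ := by
    rw [damping, mul_div_right_comm]
    exact mul_le_mul_of_nonneg_right (min_cube_one_div_le_two_mul_Dfun_div ht) (sq_nonneg _)
  calc (‖ξ‖ ^ k) ^ 2 * exp (-(2 * damping t ξ))
      ≤ (‖ξ‖ ^ 2) ^ k * exp (-(m / 13 * ‖ξ‖ ^ 2)) := by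
        rw [rpow_pow_comm (norm_nonneg ξ)]
        exact mul_le_mul_of_nonneg_left (exp_le_exp.2 (by linarith)) (by positivity)
    _ ≤ (k / (m / 13)) ^ k := rpow_mul_exp_neg_mul_le hk (by positivity) (sq_nonneg _)
    _ = (13 * k) ^ k * m ^ (-k) := by
        rw [div_div_eq_mul_div, div_rpow (by positivity) hm.le, rpow_neg hm.le, mul_comm k,
          div_eq_mul_inv]
    _ ≤ (13 * k) ^ k * (1 + t ^ (-(3 * k))) := by
        gcongr
        exact min_cube_one_rpow_neg_le ht

lemma norm_rpow_sq_mul_sq_le {k : ℝ} (hk : 0 ≤ k) (ht : 0 < t) (ξ : E3) :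
    (‖ξ‖ ^ k) ^ 2 * (massBound * exp (-damping t ξ) * exp (-(2 * t))) ^ 2 ≤
      massBound ^ 2 * (13 * k) ^ k * (1 + t ^ (-(3 * k))) * exp (-(4 * t)) := by
  have h2s : exp (-damping t ξ) ^ 2 = exp (-(2 * damping t ξ)) := by
    rw [← exp_nat_mul]; ring_nf
  have h4t : exp (-(2 * t)) ^ 2 = exp (-(4 * t)) := by
    rw [← exp_nat_mul]; ring_nf
  calc (‖ξ‖ ^ k) ^ 2 * (massBound * exp (-damping t ξ) * exp (-(2 * t))) ^ 2
      = massBound ^ 2 * ((‖ξ‖ ^ k) ^ 2 * exp (-(2 * damping t ξ))) * exp (-(4 * t)) := by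
        rw [← h2s, ← h4t]; ring
    _ ≤ massBound ^ 2 * ((13 * k) ^ k * (1 + t ^ (-(3 * k)))) * exp (-(4 * t)) := by
        gcongr massBound ^ 2 * ?_ * exp (-(4 * t))
        exact norm_rpow_sq_mul_exp_damping_le hk ht ξ
    _ = massBound ^ 2 * (13 * k) ^ k * (1 + t ^ (-(3 * k))) * exp (-(4 * t)) := by ring

end G1hat

/-- `‖ |ξ|^k e^{tA(ξ)} g₀ ‖² ≤ C(k) (1 + t^{-3k}) e^{-4t} ‖g₀‖²` in `L²_v`. -/
theorem semigroup_weighted_L2_bound (k : ℝ) (hk : 0 ≤ k) :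
    ∃ C : ℝ, 0 < C ∧ ∀ g₀ : E3 → ℂ, MemLp g₀ 2 (volume : Measure E3) →
      ∀ t : ℝ, 0 < t → ∀ ξ : E3,
        (∫ v : E3, (‖ξ‖ ^ k * ‖∫ u : E3, G1hat t ξ v u * g₀ u‖) ^ 2) ≤
          C * (1 + t ^ (-(3 * k))) * Real.exp (-(4 * t)) *
            ∫ u : E3, ‖g₀ u‖ ^ 2 := by
  have hk13 : 0 < (13 * k) ^ k := by
    rcases hk.eq_or_lt with rfl | hk
    · simp
    · positivity
  have hmass := G1hat.massBound_pos
  refine ⟨G1hat.massBound ^ 2 * (13 * k) ^ k, by positivity, fun g₀ hg₀ t ht ξ => ?_⟩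
  have hG : 0 ≤ ∫ u, ‖g₀ u‖ ^ 2 := integral_nonneg fun u => by positivity
  calc ∫ v, (‖ξ‖ ^ k * ‖∫ u, G1hat t ξ v u * g₀ u‖) ^ 2
      = (‖ξ‖ ^ k) ^ 2 * ∫ v, ‖∫ u, G1hat t ξ v u * g₀ u‖ ^ 2 := by
        simp only [mul_pow, integral_const_mul]
    _ ≤ (‖ξ‖ ^ k) ^ 2 * ((G1hat.massBound * exp (-G1hat.damping t ξ) * exp (-(2 * t))) ^ 2 *
          ∫ u, ‖g₀ u‖ ^ 2) := by
        gcongr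
        exact G1hat.integral_sq_norm_integral_mul_le ht ξ hg₀
    _ ≤ _ := by
        rw [← mul_assoc]
        exact mul_le_mul_of_nonneg_right (G1hat.norm_rpow_sq_mul_sq_le hk ht ξ) hG

end
end
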